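/- arXiv:1610.03242 — 7 statements merged into one kernel-verified Lean document; each statement's English description precedes it below -/
import Mathlib

section
/- Let α₁, α₂, α₃ and Γ₁, Γ₂, Γ₃ be real numbers with κ ∉ {α₁, α₂, α₃}, and suppose Γ₁α₁ + Γ₂α₂ + Γ₃α₃ ≠ 0 and Γ₁ + Γ₂ + Γ₃ = 0. Then the equation ∑ᵢ Γᵢ(αᵢ − 1/(αᵢ − κ)) = 0 holds if and only if ∏ᵢ(κ − αᵢ) + κ + C = 0, where C = (Γ₁α₂α₃ + Γ₂α₃α₁ + Γ₃α₁α₂)/(Γ₁α₁ + Γ₂α₂ + Γ₃α₃). -/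
/-!
Clearing denominators, `∑ᵢ Γᵢ / (αᵢ - κ) · ∏ᵢ (αᵢ - κ) = ∑ᵢ Γᵢ ∏_{j ≠ i} (αⱼ - κ)`, and since `∑ᵢ Γᵢ = 0`
the `κ²` terms cancel while the `κ` terms collapse to `κ ∑ᵢ Γᵢ αᵢ`. The equation thus reads
`S · ∏ᵢ (αᵢ - κ) = P + κ S` with `S = ∑ᵢ Γᵢ αᵢ` and `P = Γ₁α₂α₃ + Γ₂α₃α₁ + Γ₃α₁α₂`; dividing by `S ≠ 0`
gives the cubic.
-/

section

variable {K : Type*} [Field K] {α₁ α₂ α₃ Γ₁ Γ₂ Γ₃ κ : K}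

theorem sum_div_sub_mul_prod_sub_of_sum_eq_zero
    (h1 : α₁ - κ ≠ 0) (h2 : α₂ - κ ≠ 0) (h3 : α₃ - κ ≠ 0) (hΓ : Γ₁ + Γ₂ + Γ₃ = 0) :
    (Γ₁ / (α₁ - κ) + Γ₂ / (α₂ - κ) + Γ₃ / (α₃ - κ)) * ((α₁ - κ) * (α₂ - κ) * (α₃ - κ)) =
      Γ₁ * α₂ * α₃ + Γ₂ * α₃ * α₁ + Γ₃ * α₁ * α₂ + κ * (Γ₁ * α₁ + Γ₂ * α₂ + Γ₃ * α₃) := by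
  field_simp
  linear_combination (κ ^ 2 - κ * (α₁ + α₂ + α₃)) * hΓ

end

theorem kappa_equation_iff_cubic
    (α₁ α₂ α₃ Γ₁ Γ₂ Γ₃ κ : ℝ)
    (h1 : κ ≠ α₁) (h2 : κ ≠ α₂) (h3 : κ ≠ α₃)
    (hΓα : Γ₁ * α₁ + Γ₂ * α₂ + Γ₃ * α₃ ≠ 0)
    (hΓ : Γ₁ + Γ₂ + Γ₃ = 0) :
    (Γ₁ * (α₁ - 1 / (α₁ - κ)) + Γ₂ * (α₂ - 1 / (α₂ - κ))
      + Γ₃ * (α₃ - 1 / (α₃ - κ)) = 0) ↔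
    ((κ - α₁) * (κ - α₂) * (κ - α₃) + κ +
      (Γ₁ * α₂ * α₃ + Γ₂ * α₃ * α₁ + Γ₃ * α₁ * α₂) /
        (Γ₁ * α₁ + Γ₂ * α₂ + Γ₃ * α₃) = 0) := by
  have d1 : α₁ - κ ≠ 0 := sub_ne_zero.mpr h1.symm
  have d2 : α₂ - κ ≠ 0 := sub_ne_zero.mpr h2.symm
  have d3 : α₃ - κ ≠ 0 := sub_ne_zero.mpr h3.symm
  have hD : (α₁ - κ) * (α₂ - κ) * (α₃ - κ) ≠ 0 := mul_ne_zero (mul_ne_zero d1 d2) d3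
  have hcleared := sum_div_sub_mul_prod_sub_of_sum_eq_zero d1 d2 d3 hΓ
  set S := Γ₁ * α₁ + Γ₂ * α₂ + Γ₃ * α₃
  have hLHS : Γ₁ * (α₁ - 1 / (α₁ - κ)) + Γ₂ * (α₂ - 1 / (α₂ - κ)) + Γ₃ * (α₃ - 1 / (α₃ - κ)) =
      S - (Γ₁ / (α₁ - κ) + Γ₂ / (α₂ - κ) + Γ₃ / (α₃ - κ)) := by
    ring
  rw [hLHS, sub_eq_zero, ← mul_left_inj' hD, hcleared]
  field_simp
  constructor <;> intro h <;> linear_combination -h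
end

section
/- Let V be an additive abelian group, τ, σ, ρ : V → ℝ, and α, β, γ ∈ V shifts, with constants a(ξ,η) skew-symmetric. If for all x ∈ V and all pairs (ξ,η) ∈ {(α,β),(α,γ),(β,γ)} the relation a(ξ,η)·τ(x)·σ(x+ξ+η) = σ(x+ξ)τ(x+η) − τ(x+ξ)σ(x+η) holds, and τ is nowhere zero, then the Bäcklund-type identity a(α,β)·τ(x+γ)·σ(x+α+β) − a(α,γ)·τ(x+β)·σ(x+α+γ) + a(β,γ)·τ(x+α)·σ(x+β+γ) = 0 holds for all x ∈ V. -/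
/-- Weighted by `τ (x + γ)`, `-τ (x + β)` and `τ (x + α)`, the right-hand sides of the three
relations cancel in pairs. -/
theorem mul_backlund_combination_eq_zero {V R : Type*} [AddCommGroup V] [CommRing R]
    (τ σ : V → R) (α β γ : V) (a : V → V → R) (x : V)
    (hαβ : a α β * τ x * σ (x + α + β) = σ (x + α) * τ (x + β) - τ (x + α) * σ (x + β))
    (hαγ : a α γ * τ x * σ (x + α + γ) = σ (x + α) * τ (x + γ) - τ (x + α) * σ (x + γ))
    (hβγ : a β γ * τ x * σ (x + β + γ) = σ (x + β) * τ (x + γ) - τ (x + β) * σ (x + γ)) :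
    τ x * (a α β * τ (x + γ) * σ (x + α + β)
      - a α γ * τ (x + β) * σ (x + α + γ)
      + a β γ * τ (x + α) * σ (x + β + γ)) = 0 := by
  linear_combination τ (x + γ) * hαβ - τ (x + β) * hαγ + τ (x + α) * hβγ

theorem sigma_backlund_identity_general
    {V : Type*} [AddCommGroup V]
    (τ σ : V → ℝ) (α β γ : V)
    (a : V → V → ℝ)
    (hσ : ∀ ξ ∈ ({α, β, γ} : Set V), ∀ η ∈ ({α, β, γ} : Set V), ∀ x : V,
      a ξ η * τ x * σ (x + ξ + η) =
        σ (x + ξ) * τ (x + η) - τ (x + ξ) * σ (x + η))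
    (hτ0 : ∀ x, τ x ≠ 0) :
    ∀ x : V,
      a α β * τ (x + γ) * σ (x + α + β)
      - a α γ * τ (x + β) * σ (x + α + γ)
      + a β γ * τ (x + α) * σ (x + β + γ) = 0 := by
  intro x
  have hα : α ∈ ({α, β, γ} : Set V) := Set.mem_insert α _
  have hβ : β ∈ ({α, β, γ} : Set V) := by simp
  have hγ : γ ∈ ({α, β, γ} : Set V) := by simp
  have key := mul_backlund_combination_eq_zero τ σ α β γ a x
    (hσ α hα β hβ x) (hσ α hα γ hγ x) (hσ β hβ γ hγ x)
  exact (mul_eq_zero.mp key).resolve_left (hτ0 x)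

theorem sigma_backlund_identity
    {V : Type*} [AddCommGroup V]
    (τ σ : V → ℝ) (α β γ : V)
    (a : V → V → ℝ)
    (haskew : ∀ ξ η, a ξ η = - a η ξ)
    (hσ : ∀ ξ ∈ ({α, β, γ} : Set V), ∀ η ∈ ({α, β, γ} : Set V), ∀ x : V,
      a ξ η * τ x * σ (x + ξ + η) =
        σ (x + ξ) * τ (x + η) - τ (x + ξ) * σ (x + η))
    (hτ0 : ∀ x, τ x ≠ 0) :
    ∀ x : V,
      a α β * τ (x + γ) * σ (x + α + β)
      - a α γ * τ (x + β) * σ (x + α + γ)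
      + a β γ * τ (x + α) * σ (x + β + γ) = 0 :=
  sigma_backlund_identity_general τ σ α β γ a hσ hτ0
end

section
/- Let V be an additive abelian group and α, β, γ, δ, κ ∈ V. Suppose τ, σ, ρ : V → ℝ satisfy, for all x ∈ V and all pairs (ξ,η) from {α,β,γ,δ,κ}, the three relations: (i) a(ξ,η)τ(x)σ(x+ξ+η) = σ(x+ξ)τ(x+η) − τ(x+ξ)σ(x+η); (ii) a(ξ,η)ρ(x)τ(x+ξ+η) = τ(x+ξ)ρ(x+η) − ρ(x+ξ)τ(x+η); (iii) τ(x)τ(x+ξ+η) + ρ(x)σ(x+ξ+η) = b(ξ,η)τ(x+ξ)τ(x+η), where a is skew-symmetric and b symmetric. Assume τ and ρ are nowhere zero. Then for all x ∈ V the four-shift identity holds: a(α,β)a(γ,δ)·ρ(x)·σ(x+α+β+γ+δ) − b(α,γ)b(β,δ)·τ(x+α+δ)·τ(x+β+γ) + b(α,δ)b(β,γ)·τ(x+α+γ)·τ(x+β+δ) = 0. -/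
/-!
Three-shift identities come first: relation (i) at `x + ξ`, multiplied by `ρ x`, becomes after
two uses of (iii) an identity expressing `a η ζ ρ(x) σ(x+ξ+η+ζ)` through products of `τ`; feeding
it into (iii) at `x + η` and (ii) gives the companion identity for `a η ζ ρ(x) τ(x+ξ+η+ζ)`.
The four-shift identity is then relation (i) for `(α, β)` at `x + γ + δ`, multiplied by
`a γ δ ρ(x)`, in which the two three-shift identities and (iii) for `(β, γ)`, `(β, δ)` eliminate
every term but those of the claim. Each step cancels a value of `τ`, hence `τ ≠ 0`.
-/

section ShiftRelations

variable {V : Type*} [AddCommGroup V]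

/-- `ShiftBilinear a τ σ` and `ShiftBilinear a ρ τ` are relations (i) and (ii) of the system;
`ShiftQuadratic b τ ρ σ` below is (iii). -/
def ShiftBilinear (a : V → V → ℝ) (f g : V → ℝ) (ξ η : V) : Prop :=
  ∀ x, a ξ η * f x * g (x + ξ + η) = g (x + ξ) * f (x + η) - f (x + ξ) * g (x + η)

def ShiftQuadratic (b : V → V → ℝ) (τ ρ σ : V → ℝ) (ξ η : V) : Prop :=
  ∀ x, τ x * τ (x + ξ + η) + ρ x * σ (x + ξ + η) = b ξ η * τ (x + ξ) * τ (x + η)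

variable {τ σ ρ : V → ℝ} {a b : V → V → ℝ} {ξ η ζ : V}

theorem ShiftBilinear.sigma_superposition (hσ : ShiftBilinear a τ σ η ζ)
    (htη : ShiftQuadratic b τ ρ σ ξ η) (htζ : ShiftQuadratic b τ ρ σ ξ ζ) {x : V}
    (hτ : τ (x + ξ) ≠ 0) :
    a η ζ * ρ x * σ (x + ξ + η + ζ) =
      b ξ η * τ (x + η) * τ (x + ξ + ζ) - b ξ ζ * τ (x + ζ) * τ (x + ξ + η) := by
  apply mul_right_cancel₀ hτ
  linear_combination ρ x * hσ (x + ξ) + τ (x + ξ + ζ) * htη x - τ (x + ξ + η) * htζ x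

theorem ShiftBilinear.tau_superposition (hσ : ShiftBilinear a τ σ η ζ)
    (hρ : ShiftBilinear a ρ τ η ζ)
    (htη : ShiftQuadratic b τ ρ σ ξ η) (htζ : ShiftQuadratic b τ ρ σ ξ ζ) {x : V}
    (hτξ : τ (x + ξ) ≠ 0) (hτη : τ (x + η) ≠ 0) :
    a η ζ * ρ x * τ (x + ξ + η + ζ) =
      b ξ ζ * τ (x + ξ + η) * ρ (x + ζ) - b ξ η * τ (x + ξ + ζ) * ρ (x + η) := by
  apply mul_right_cancel₀ hτη
  have htζ_shifted := htζ (x + η)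
  rw [add_right_comm x η ξ] at htζ_shifted
  linear_combination a η ζ * ρ x * htζ_shifted + b ξ ζ * τ (x + ξ + η) * hρ x
    - ρ (x + η) * hσ.sigma_superposition htη htζ hτξ

variable {α β γ δ : V}

theorem four_shift_identity_of_shift_relations
    (hσαβ : ShiftBilinear a τ σ α β) (hσγδ : ShiftBilinear a τ σ γ δ)
    (hργδ : ShiftBilinear a ρ τ γ δ)
    (htαγ : ShiftQuadratic b τ ρ σ α γ) (htαδ : ShiftQuadratic b τ ρ σ α δ)
    (htβγ : ShiftQuadratic b τ ρ σ β γ) (htβδ : ShiftQuadratic b τ ρ σ β δ)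
    (hτ : ∀ x, τ x ≠ 0) (x : V) :
    a α β * a γ δ * ρ x * σ (x + α + β + γ + δ)
      - b α γ * b β δ * τ (x + α + δ) * τ (x + β + γ)
      + b α δ * b β γ * τ (x + α + γ) * τ (x + β + δ) = 0 := by
  apply mul_right_cancel₀ (hτ (x + γ + δ))
  -- `abel_nf` brings the shifted arguments such as `x + γ + δ + α + β` to a common normal form
  linear_combination (norm := (abel_nf; ring1))
    ρ x * a γ δ * hσαβ (x + γ + δ)
    + τ (x + β + γ + δ) * hσγδ.sigma_superposition htαγ htαδ (hτ (x + α))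
    - σ (x + β + γ + δ) * hσγδ.tau_superposition hργδ htαγ htαδ (hτ (x + α)) (hτ (x + γ))
    - b α δ * τ (x + α + γ) * htβγ (x + δ) + b α γ * τ (x + α + δ) * htβδ (x + γ)

end ShiftRelations

theorem four_shift_identity_general
    {V : Type*} [AddCommGroup V]
    (τ σ ρ : V → ℝ) (α β γ δ κ : V)
    (a b : V → V → ℝ)
    (hσ : ∀ ξ ∈ ({α, β, γ, δ, κ} : Set V), ∀ η ∈ ({α, β, γ, δ, κ} : Set V), ∀ x : V,
      a ξ η * τ x * σ (x + ξ + η) =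
        σ (x + ξ) * τ (x + η) - τ (x + ξ) * σ (x + η))
    (hρ : ∀ ξ ∈ ({α, β, γ, δ, κ} : Set V), ∀ η ∈ ({α, β, γ, δ, κ} : Set V), ∀ x : V,
      a ξ η * ρ x * τ (x + ξ + η) =
        τ (x + ξ) * ρ (x + η) - ρ (x + ξ) * τ (x + η))
    (ht : ∀ ξ ∈ ({α, β, γ, δ, κ} : Set V), ∀ η ∈ ({α, β, γ, δ, κ} : Set V), ∀ x : V,
      τ x * τ (x + ξ + η) + ρ x * σ (x + ξ + η) =
        b ξ η * τ (x + ξ) * τ (x + η))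
    (hτ0 : ∀ x, τ x ≠ 0) :
    ∀ x : V,
      a α β * a γ δ * ρ x * σ (x + α + β + γ + δ)
      - b α γ * b β δ * τ (x + α + δ) * τ (x + β + γ)
      + b α δ * b β γ * τ (x + α + γ) * τ (x + β + δ) = 0 :=
  four_shift_identity_of_shift_relations
    (hσ α (by simp) β (by simp)) (hσ γ (by simp) δ (by simp)) (hρ γ (by simp) δ (by simp))
    (ht α (by simp) γ (by simp)) (ht α (by simp) δ (by simp))
    (ht β (by simp) γ (by simp)) (ht β (by simp) δ (by simp)) hτ0

theorem four_shift_identity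
    {V : Type*} [AddCommGroup V]
    (τ σ ρ : V → ℝ) (α β γ δ κ : V)
    (a b : V → V → ℝ)
    (haskew : ∀ ξ η, a ξ η = - a η ξ)
    (hbsymm : ∀ ξ η, b ξ η = b η ξ)
    (hσ : ∀ ξ ∈ ({α, β, γ, δ, κ} : Set V), ∀ η ∈ ({α, β, γ, δ, κ} : Set V), ∀ x : V,
      a ξ η * τ x * σ (x + ξ + η) =
        σ (x + ξ) * τ (x + η) - τ (x + ξ) * σ (x + η))
    (hρ : ∀ ξ ∈ ({α, β, γ, δ, κ} : Set V), ∀ η ∈ ({α, β, γ, δ, κ} : Set V), ∀ x : V,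
      a ξ η * ρ x * τ (x + ξ + η) =
        τ (x + ξ) * ρ (x + η) - ρ (x + ξ) * τ (x + η))
    (ht : ∀ ξ ∈ ({α, β, γ, δ, κ} : Set V), ∀ η ∈ ({α, β, γ, δ, κ} : Set V), ∀ x : V,
      τ x * τ (x + ξ + η) + ρ x * σ (x + ξ + η) =
        b ξ η * τ (x + ξ) * τ (x + η))
    (hτ0 : ∀ x, τ x ≠ 0) (hρ0 : ∀ x, ρ x ≠ 0) :
    ∀ x : V,
      a α β * a γ δ * ρ x * σ (x + α + β + γ + δ)
      - b α γ * b β δ * τ (x + α + δ) * τ (x + β + γ)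
      + b α δ * b β γ * τ (x + α + γ) * τ (x + β + δ) = 0 :=
  four_shift_identity_general τ σ ρ α β γ δ κ a b hσ hρ ht hτ0
end

section
/- Let V be an additive abelian group, τ, σ, ρ : V → ℝ satisfying the three Ablowitz-Ladik-Hirota relations for pairs from {α, β, γ} (with skew-symmetric a and symmetric b), with τ nowhere zero. Then the identity T(α,β,γ)(x) = 0 holds for all x, where T(α,β,γ)(x) := a(α,β)·ρ(x)·σ(x+α+β+γ) − b(α,γ)·τ(x+α)·τ(x+β+γ) + b(β,γ)·τ(x+β)·τ(x+α+γ). -/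
/-!
Multiplied by `τ (x + γ)`, the expression `T(α,β,γ)(x)` is the combination
`ρ x · (σ-relation for (α,β) at x + γ) + τ (x+β+γ) · (bilinear relation for (α,γ) at x)
 - τ (x+α+γ) · (bilinear relation for (β,γ) at x)`, so it vanishes once `τ` is nowhere zero.
-/

theorem T_mul_tau_eq_zero {V R : Type*} [AddCommGroup V] [CommRing R]
    (τ σ ρ : V → R) (α β γ x : V) (aαβ bαγ bβγ : R)
    (hσαβ : aαβ * τ (x + γ) * σ (x + γ + α + β) =
      σ (x + γ + α) * τ (x + γ + β) - τ (x + γ + α) * σ (x + γ + β))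
    (htαγ : τ x * τ (x + α + γ) + ρ x * σ (x + α + γ) = bαγ * τ (x + α) * τ (x + γ))
    (htβγ : τ x * τ (x + β + γ) + ρ x * σ (x + β + γ) = bβγ * τ (x + β) * τ (x + γ)) :
    (aαβ * ρ x * σ (x + α + β + γ)
      - bαγ * τ (x + α) * τ (x + β + γ)
      + bβγ * τ (x + β) * τ (x + α + γ)) * τ (x + γ) = 0 := by
  rw [show x + γ + α + β = x + α + β + γ by abel, show x + γ + α = x + α + γ by abel,
    show x + γ + β = x + β + γ by abel] at hσαβ
  linear_combination ρ x * hσαβ + τ (x + β + γ) * htαγ - τ (x + α + γ) * htβγ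

theorem T_identity_general
    {V : Type*} [AddCommGroup V]
    (τ σ ρ : V → ℝ) (α β γ : V)
    (a b : V → V → ℝ)
    (hσ : ∀ ξ ∈ ({α, β, γ} : Set V), ∀ η ∈ ({α, β, γ} : Set V), ∀ x : V,
      a ξ η * τ x * σ (x + ξ + η) =
        σ (x + ξ) * τ (x + η) - τ (x + ξ) * σ (x + η))
    (ht : ∀ ξ ∈ ({α, β, γ} : Set V), ∀ η ∈ ({α, β, γ} : Set V), ∀ x : V,
      τ x * τ (x + ξ + η) + ρ x * σ (x + ξ + η) =
        b ξ η * τ (x + ξ) * τ (x + η))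
    (hτ0 : ∀ x, τ x ≠ 0) :
    ∀ x : V,
      a α β * ρ x * σ (x + α + β + γ)
      - b α γ * τ (x + α) * τ (x + β + γ)
      + b β γ * τ (x + β) * τ (x + α + γ) = 0 := by
  intro x
  refine (mul_eq_zero.mp (T_mul_tau_eq_zero τ σ ρ α β γ x _ _ _ ?_ ?_ ?_)).resolve_right (hτ0 _)
  · exact hσ α (by simp) β (by simp) (x + γ)
  · exact ht α (by simp) γ (by simp) x
  · exact ht β (by simp) γ (by simp) x

theorem T_identity
    {V : Type*} [AddCommGroup V]
    (τ σ ρ : V → ℝ) (α β γ : V)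
    (a b : V → V → ℝ)
    (haskew : ∀ ξ η, a ξ η = - a η ξ)
    (hbsymm : ∀ ξ η, b ξ η = b η ξ)
    (hσ : ∀ ξ ∈ ({α, β, γ} : Set V), ∀ η ∈ ({α, β, γ} : Set V), ∀ x : V,
      a ξ η * τ x * σ (x + ξ + η) =
        σ (x + ξ) * τ (x + η) - τ (x + ξ) * σ (x + η))
    (hρ : ∀ ξ ∈ ({α, β, γ} : Set V), ∀ η ∈ ({α, β, γ} : Set V), ∀ x : V,
      a ξ η * ρ x * τ (x + ξ + η) =
        τ (x + ξ) * ρ (x + η) - ρ (x + ξ) * τ (x + η))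
    (ht : ∀ ξ ∈ ({α, β, γ} : Set V), ∀ η ∈ ({α, β, γ} : Set V), ∀ x : V,
      τ x * τ (x + ξ + η) + ρ x * σ (x + ξ + η) =
        b ξ η * τ (x + ξ) * τ (x + η))
    (hτ0 : ∀ x, τ x ≠ 0) :
    ∀ x : V,
      a α β * ρ x * σ (x + α + β + γ)
      - b α γ * τ (x + α) * τ (x + β + γ)
      + b β γ * τ (x + β) * τ (x + α + γ) = 0 :=
  T_identity_general τ σ ρ α β γ a b hσ ht hτ0
end

section
/- Let V be an additive abelian group, τ, σ, ρ : V → ℝ satisfying the Ablowitz-Ladik-Hirota relations for pairs from {α, β, γ}, with τ nowhere zero. Then S(α,β,γ)(x) = 0 for all x, where S(α,β,γ)(x) := a(α,β)·τ(x)·σ(x+α+β+γ) − b(β,γ)·τ(x+β)·σ(x+α+γ) + b(α,γ)·τ(x+α)·σ(x+β+γ). -/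
/-! The relation for `σ` with shifts `(α, β)` at `x + γ`, together with the bilinear relations
for `(β, γ)` and `(α, γ)` at `x`, express `τ (x + γ) * S (x)` as a combination in which the two
terms `ρ x * σ (x + α + γ) * σ (x + β + γ)` cancel; since `τ (x + γ) ≠ 0`, `S (x) = 0`. -/

section

variable {V R : Type*} [AddCommGroup V] [CommRing R]
  (τ σ ρ : V → R) (a b : V → V → R) (α β γ : V)

def alhS (x : V) : R :=
  a α β * τ x * σ (x + α + β + γ)
  - b β γ * τ (x + β) * σ (x + α + γ)
  + b α γ * τ (x + α) * σ (x + β + γ)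

variable {τ σ ρ a b α β γ}

theorem mul_alhS_eq_zero (x : V)
    (hσ : a α β * τ (x + γ) * σ (x + γ + α + β) =
      σ (x + γ + α) * τ (x + γ + β) - τ (x + γ + α) * σ (x + γ + β))
    (hβγ : τ x * τ (x + β + γ) + ρ x * σ (x + β + γ) = b β γ * τ (x + β) * τ (x + γ))
    (hαγ : τ x * τ (x + α + γ) + ρ x * σ (x + α + γ) = b α γ * τ (x + α) * τ (x + γ)) :
    τ (x + γ) * alhS τ σ a b α β γ x = 0 := by
  rw [show x + γ + α + β = x + α + β + γ by abel, show x + γ + α = x + α + γ by abel,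
    show x + γ + β = x + β + γ by abel] at hσ
  unfold alhS
  linear_combination τ x * hσ + σ (x + α + γ) * hβγ - σ (x + β + γ) * hαγ

theorem alhS_eq_zero [IsDomain R] (x : V)
    (hσ : a α β * τ (x + γ) * σ (x + γ + α + β) =
      σ (x + γ + α) * τ (x + γ + β) - τ (x + γ + α) * σ (x + γ + β))
    (hβγ : τ x * τ (x + β + γ) + ρ x * σ (x + β + γ) = b β γ * τ (x + β) * τ (x + γ))
    (hαγ : τ x * τ (x + α + γ) + ρ x * σ (x + α + γ) = b α γ * τ (x + α) * τ (x + γ))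
    (hτ : τ (x + γ) ≠ 0) :
    alhS τ σ a b α β γ x = 0 :=
  (mul_eq_zero.mp (mul_alhS_eq_zero x hσ hβγ hαγ)).resolve_left hτ

end

theorem S_identity_general
    {V : Type*} [AddCommGroup V]
    (τ σ ρ : V → ℝ) (α β γ : V)
    (a b : V → V → ℝ)
    (hσ : ∀ ξ ∈ ({α, β, γ} : Set V), ∀ η ∈ ({α, β, γ} : Set V), ∀ x : V,
      a ξ η * τ x * σ (x + ξ + η) =
        σ (x + ξ) * τ (x + η) - τ (x + ξ) * σ (x + η))
    (ht : ∀ ξ ∈ ({α, β, γ} : Set V), ∀ η ∈ ({α, β, γ} : Set V), ∀ x : V,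
      τ x * τ (x + ξ + η) + ρ x * σ (x + ξ + η) =
        b ξ η * τ (x + ξ) * τ (x + η))
    (hτ0 : ∀ x, τ x ≠ 0) :
    ∀ x : V,
      a α β * τ x * σ (x + α + β + γ)
      - b β γ * τ (x + β) * σ (x + α + γ)
      + b α γ * τ (x + α) * σ (x + β + γ) = 0 := by
  have hα : α ∈ ({α, β, γ} : Set V) := by simp
  have hβ : β ∈ ({α, β, γ} : Set V) := by simp
  have hγ : γ ∈ ({α, β, γ} : Set V) := by simp
  intro x
  exact alhS_eq_zero x (hσ α hα β hβ (x + γ)) (ht β hβ γ hγ x) (ht α hα γ hγ x) (hτ0 (x + γ))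

theorem S_identity
    {V : Type*} [AddCommGroup V]
    (τ σ ρ : V → ℝ) (α β γ : V)
    (a b : V → V → ℝ)
    (haskew : ∀ ξ η, a ξ η = - a η ξ)
    (hbsymm : ∀ ξ η, b ξ η = b η ξ)
    (hσ : ∀ ξ ∈ ({α, β, γ} : Set V), ∀ η ∈ ({α, β, γ} : Set V), ∀ x : V,
      a ξ η * τ x * σ (x + ξ + η) =
        σ (x + ξ) * τ (x + η) - τ (x + ξ) * σ (x + η))
    (hρ : ∀ ξ ∈ ({α, β, γ} : Set V), ∀ η ∈ ({α, β, γ} : Set V), ∀ x : V,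
      a ξ η * ρ x * τ (x + ξ + η) =
        τ (x + ξ) * ρ (x + η) - ρ (x + ξ) * τ (x + η))
    (ht : ∀ ξ ∈ ({α, β, γ} : Set V), ∀ η ∈ ({α, β, γ} : Set V), ∀ x : V,
      τ x * τ (x + ξ + η) + ρ x * σ (x + ξ + η) =
        b ξ η * τ (x + ξ) * τ (x + η))
    (hτ0 : ∀ x, τ x ≠ 0) :
    ∀ x : V,
      a α β * τ x * σ (x + α + β + γ)
      - b β γ * τ (x + β) * σ (x + α + γ)
      + b α γ * τ (x + α) * σ (x + β + γ) = 0 :=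
  S_identity_general τ σ ρ α β γ a b hσ ht hτ0
end

section
/- Let V be an additive abelian group, τ, σ, ρ : V → ℝ satisfying the Ablowitz-Ladik-Hirota relations for pairs from {α, β, γ}, with τ nowhere zero. Then R(α,β,γ)(x) = 0 for all x, where R(α,β,γ)(x) := a(α,β)·ρ(x)·τ(x+α+β+γ) − b(β,γ)·ρ(x+β)·τ(x+α+γ) + b(α,γ)·ρ(x+α)·τ(x+β+γ). -/
/-!
Multiply `R(α,β,γ)(x)` by `τ(x+α+β)`. The `ρ`-relation for `(α,β)` at `x` rewrites the first
term, and the `τ`-relations for `(β,γ)` at `x+α` and for `(α,γ)` at `x+β` rewrite the other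
two; their `σ`-terms cancel and what remains vanishes identically. Since `τ` has no zeros,
`R(α,β,γ)(x) = 0`.
-/

section

variable {V : Type*} [AddCommGroup V] (τ σ ρ : V → ℝ) (a b : V → V → ℝ) (ξ η ζ : V)

theorem tau_mul_R_eq_zero
    (hρ : ∀ x, a ξ η * ρ x * τ (x + ξ + η) = τ (x + ξ) * ρ (x + η) - ρ (x + ξ) * τ (x + η))
    (htηζ : ∀ x, τ x * τ (x + η + ζ) + ρ x * σ (x + η + ζ) = b η ζ * τ (x + η) * τ (x + ζ))
    (htξζ : ∀ x, τ x * τ (x + ξ + ζ) + ρ x * σ (x + ξ + ζ) = b ξ ζ * τ (x + ξ) * τ (x + ζ))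
    (x : V) :
    τ (x + ξ + η) *
      (a ξ η * ρ x * τ (x + ξ + η + ζ)
        - b η ζ * ρ (x + η) * τ (x + ξ + ζ)
        + b ξ ζ * ρ (x + ξ) * τ (x + η + ζ)) = 0 := by
  have hξζ := htξζ (x + η)
  rw [add_right_comm x η ξ] at hξζ
  linear_combination τ (x + ξ + η + ζ) * hρ x + ρ (x + η) * htηζ (x + ξ) - ρ (x + ξ) * hξζ

theorem R_eq_zero_of_tau_ne_zero
    (hρ : ∀ x, a ξ η * ρ x * τ (x + ξ + η) = τ (x + ξ) * ρ (x + η) - ρ (x + ξ) * τ (x + η))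
    (htηζ : ∀ x, τ x * τ (x + η + ζ) + ρ x * σ (x + η + ζ) = b η ζ * τ (x + η) * τ (x + ζ))
    (htξζ : ∀ x, τ x * τ (x + ξ + ζ) + ρ x * σ (x + ξ + ζ) = b ξ ζ * τ (x + ξ) * τ (x + ζ))
    (hτ0 : ∀ x, τ x ≠ 0) (x : V) :
    a ξ η * ρ x * τ (x + ξ + η + ζ)
      - b η ζ * ρ (x + η) * τ (x + ξ + ζ)
      + b ξ ζ * ρ (x + ξ) * τ (x + η + ζ) = 0 :=
  (mul_eq_zero.mp (tau_mul_R_eq_zero τ σ ρ a b ξ η ζ hρ htηζ htξζ x)).resolve_left (hτ0 _)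

end

theorem R_identity_general
    {V : Type*} [AddCommGroup V]
    (τ σ ρ : V → ℝ) (α β γ : V)
    (a b : V → V → ℝ)
    (hρ : ∀ ξ ∈ ({α, β, γ} : Set V), ∀ η ∈ ({α, β, γ} : Set V), ∀ x : V,
      a ξ η * ρ x * τ (x + ξ + η) =
        τ (x + ξ) * ρ (x + η) - ρ (x + ξ) * τ (x + η))
    (ht : ∀ ξ ∈ ({α, β, γ} : Set V), ∀ η ∈ ({α, β, γ} : Set V), ∀ x : V,
      τ x * τ (x + ξ + η) + ρ x * σ (x + ξ + η) =
        b ξ η * τ (x + ξ) * τ (x + η))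
    (hτ0 : ∀ x, τ x ≠ 0) :
    ∀ x : V,
      a α β * ρ x * τ (x + α + β + γ)
      - b β γ * ρ (x + β) * τ (x + α + γ)
      + b α γ * ρ (x + α) * τ (x + β + γ) = 0 :=
  R_eq_zero_of_tau_ne_zero τ σ ρ a b α β γ (hρ α (by simp) β (by simp))
    (ht β (by simp) γ (by simp)) (ht α (by simp) γ (by simp)) hτ0

theorem R_identity
    {V : Type*} [AddCommGroup V]
    (τ σ ρ : V → ℝ) (α β γ : V)
    (a b : V → V → ℝ)
    (haskew : ∀ ξ η, a ξ η = - a η ξ)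
    (hbsymm : ∀ ξ η, b ξ η = b η ξ)
    (hσ : ∀ ξ ∈ ({α, β, γ} : Set V), ∀ η ∈ ({α, β, γ} : Set V), ∀ x : V,
      a ξ η * τ x * σ (x + ξ + η) =
        σ (x + ξ) * τ (x + η) - τ (x + ξ) * σ (x + η))
    (hρ : ∀ ξ ∈ ({α, β, γ} : Set V), ∀ η ∈ ({α, β, γ} : Set V), ∀ x : V,
      a ξ η * ρ x * τ (x + ξ + η) =
        τ (x + ξ) * ρ (x + η) - ρ (x + ξ) * τ (x + η))
    (ht : ∀ ξ ∈ ({α, β, γ} : Set V), ∀ η ∈ ({α, β, γ} : Set V), ∀ x : V,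
      τ x * τ (x + ξ + η) + ρ x * σ (x + ξ + η) =
        b ξ η * τ (x + ξ) * τ (x + η))
    (hτ0 : ∀ x, τ x ≠ 0) :
    ∀ x : V,
      a α β * ρ x * τ (x + α + β + γ)
      - b β γ * ρ (x + β) * τ (x + α + γ)
      + b α γ * ρ (x + α) * τ (x + β + γ) = 0 :=
  R_identity_general τ σ ρ α β γ a b hρ ht hτ0
end

section
/- Suppose τ : V → ℝ satisfies the Hirota bilinear difference equation with shifts α, β, κ: a(β,κ)τ(x+α)τ(x+β+κ) − a(α,κ)τ(x+β)τ(x+α+κ) + a(α,β)τ(x+κ)τ(x+α+β) = 0 for all x ∈ V. Let u_κ : V → ℝ be nowhere zero with u_κ(x+ξ) = a(κ,ξ)·u_κ(x) for ξ ∈ {α,β}, where a(κ,ξ) = −a(ξ,κ) ≠ 0. Define σ^(3)(x) := u_κ(x)⁻¹·τ(x−κ) and ρ^(3)(x) := u_κ(x)·τ(x+κ). Then σ^(3) satisfies a(α,β)·τ(x)·σ^(3)(x+α+β) = σ^(3)(x+α)τ(x+β) − τ(x+α)σ^(3)(x+β), and ρ^(3) satisfies a(α,β)·ρ^(3)(x)·τ(x+α+β)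 = τ(x+α)ρ^(3)(x+β) − ρ^(3)(x+α)τ(x+β), for all x ∈ V. -/
/-!
Both Miura maps are gauge transformations of shifted copies of `τ` by the plane wave `u_κ`,
which picks up the factor `a(κ,ξ) = -a(ξ,κ)` under each shift `ξ ∈ {α, β}`. Substituting
`τ(x + κ) = u(x)⁻¹ ρ(x)` (resp. `τ(x - κ) = u(x) σ(x)`) into the bilinear equation at `x`
(resp. at `x - κ`) turns it into the claimed identity multiplied by `u(x)` (resp. by
`a(α,κ) a(β,κ) u(x)`), a nonzero factor.
-/

section

variable {V K : Type*} [AddCommGroup V]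

/-- The Hirota bilinear difference equation with shifts `α, β, κ` and coefficients `a`. -/
def IsHBDE [CommRing K] (τ : V → K) (α β κ : V) (a : V → V → K) : Prop :=
  ∀ x : V,
    a β κ * τ (x + α) * τ (x + β + κ)
    - a α κ * τ (x + β) * τ (x + α + κ)
    + a α β * τ (x + κ) * τ (x + α + β) = 0

namespace IsHBDE

theorem rho_miura [CommRing K] {τ : V → K} {α β κ : V} {a : V → V → K}
    (h : IsHBDE τ α β κ a) {u : V → K}
    (huα : ∀ x, u (x + α) = -a α κ * u x) (huβ : ∀ x, u (x + β) = -a β κ * u x)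
    {ρ : V → K} (hρ : ∀ x, ρ x = u x * τ (x + κ)) (x : V) :
    a α β * ρ x * τ (x + α + β) = τ (x + α) * ρ (x + β) - ρ (x + α) * τ (x + β) := by
  rw [hρ, hρ, hρ, huα, huβ]
  linear_combination u x * h x

theorem sigma_miura [Field K] {τ : V → K} {α β κ : V} {a : V → V → K}
    (h : IsHBDE τ α β κ a) (haα : a α κ ≠ 0) (haβ : a β κ ≠ 0) {u : V → K}
    (hu0 : ∀ x, u x ≠ 0)
    (huα : ∀ x, u (x + α) = -a α κ * u x) (huβ : ∀ x, u (x + β) = -a β κ * u x)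
    {σ : V → K} (hσ : ∀ x, σ x = (u x)⁻¹ * τ (x - κ)) (x : V) :
    a α β * τ x * σ (x + α + β) = σ (x + α) * τ (x + β) - τ (x + α) * σ (x + β) := by
  have hτσ : ∀ y, τ (y - κ) = u y * σ y := fun y => by
    rw [hσ, mul_inv_cancel_left₀ (hu0 y)]
  have hαβ : u (x + α + β) = a α κ * a β κ * u x := by
    rw [huβ, huα]
    ring
  have hshift := h (x - κ)
  rw [show x - κ + β + κ = x + β by abel, show x - κ + α + κ = x + α by abel,
    show x - κ + κ = x by abel, show x - κ + α + β = x + α + β - κ by abel,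
    show x - κ + α = x + α - κ by abel, show x - κ + β = x + β - κ by abel,
    hτσ, hτσ, hτσ, huα, huβ, hαβ] at hshift
  apply mul_left_cancel₀ (mul_ne_zero (mul_ne_zero haα haβ) (hu0 x))
  linear_combination hshift

end IsHBDE

end

theorem miura_from_HBDE
    {V : Type*} [AddCommGroup V]
    (τ : V → ℝ) (α β κ : V)
    (a : V → V → ℝ)
    (haskew : ∀ ξ η, a ξ η = - a η ξ)
    (ha0 : a α κ ≠ 0) (ha0' : a β κ ≠ 0)
    (hHBDE : ∀ x : V,
      a β κ * τ (x + α) * τ (x + β + κ)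
      - a α κ * τ (x + β) * τ (x + α + κ)
      + a α β * τ (x + κ) * τ (x + α + β) = 0)
    (u : V → ℝ) (hu0 : ∀ x, u x ≠ 0)
    (hu : ∀ ξ ∈ ({α, β} : Set V), ∀ x : V, u (x + ξ) = a κ ξ * u x)
    (σ3 ρ3 : V → ℝ)
    (hσ3 : ∀ x, σ3 x = (u x)⁻¹ * τ (x - κ))
    (hρ3 : ∀ x, ρ3 x = u x * τ (x + κ)) :
    (∀ x : V,
      a α β * τ x * σ3 (x + α + β) =
        σ3 (x + α) * τ (x + β) - τ (x + α) * σ3 (x + β)) ∧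
    (∀ x : V,
      a α β * ρ3 x * τ (x + α + β) =
        τ (x + α) * ρ3 (x + β) - ρ3 (x + α) * τ (x + β)) := by
  have huα : ∀ x, u (x + α) = -a α κ * u x := fun x => by rw [hu α (by simp), haskew]
  have huβ : ∀ x, u (x + β) = -a β κ * u x := fun x => by rw [hu β (by simp), haskew]
  exact ⟨IsHBDE.sigma_miura hHBDE ha0 ha0' hu0 huα huβ hσ3,
    IsHBDE.rho_miura hHBDE huα huβ hρ3⟩
end
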